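/- arXiv:2309.09711 — 6 statements merged into one kernel-verified Lean document; each statement's English description precedes it below -/
import Mathlib

section
/- Let μ be a real random variable supported on [0,∞) with CDF F, and define its Cauchy transform G(z) = ∫ 1/(z−x) dF(x) for Re(z) < 0. Then for a > 0, ∫_0^∞ log(1 + a·x/(1+x)) dF(x) = log(1+a) + ∫_0^a (1/(y+1)^2) · G(−1/(y+1)) dy. -/
/-!
For `x ≥ 0` the function `y ↦ log (1 + (y + 1) x)` has derivative `x / (1 + (y + 1) x)`, so
`log (1 + a x / (1 + x)) = ∫₀ᵃ x / (1 + (y + 1) x) dy`. The integrand is bounded by `1` on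
`[0, a] × [0, ∞)`, so Fubini lets us integrate in `x` first, and the partial fraction
`x / (1 + c x) = 1 / c + c⁻² (-1/c - x)⁻¹` with `c = y + 1` turns the inner integral into
`1 / (y + 1) + (y + 1)⁻² G (-1 / (y + 1))`; the first term integrates to `log (1 + a)`.
-/

open MeasureTheory Set

lemma div_one_add_mul_eq {c x : ℝ} (hc : c ≠ 0) (hcx : 1 + c * x ≠ 0) :
    x / (1 + c * x) = 1 / c + 1 / c ^ 2 * (-(1 / c) - x)⁻¹ := by
  have h : (-(1 / c) - x)⁻¹ = -c / (1 + c * x) := by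
    rw [inv_eq_iff_eq_inv, inv_div]
    field_simp
    ring
  rw [h, div_eq_iff hcx, add_mul, mul_assoc, div_mul_cancel₀ _ hcx]
  field_simp
  ring

lemma abs_div_one_add_mul_le {c x : ℝ} (hc : 0 < c) (hx : 0 ≤ x) :
    |x / (1 + c * x)| ≤ c⁻¹ := by
  rw [abs_of_nonneg (by positivity), div_le_iff₀ (by positivity), mul_add,
    inv_mul_cancel_left₀ hc.ne']
  linarith [inv_pos.mpr hc]

lemma integrable_div_one_add_mul {μ : Measure ℝ} [IsFiniteMeasure μ]
    (hμ : ∀ᵐ x ∂μ, 0 ≤ x) {c : ℝ} (hc : 0 < c) :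
    Integrable (fun x => x / (1 + c * x)) μ :=
  (integrable_const c⁻¹).mono' (Measurable.aestronglyMeasurable (by fun_prop))
    (hμ.mono fun _ hx => abs_div_one_add_mul_le hc hx)

lemma integrable_div_one_add_mul_prod {μ : Measure ℝ} [IsFiniteMeasure μ]
    (hμ : ∀ᵐ x ∂μ, 0 ≤ x) {a : ℝ} (ha : 0 ≤ a) :
    Integrable (Function.uncurry fun y x : ℝ => x / (1 + (y + 1) * x))
      ((volume.restrict (uIoc 0 a)).prod μ) := by
  have hy : ∀ᵐ p ∂(volume.restrict (uIoc 0 a)).prod μ, p.1 ∈ uIoc 0 a :=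
    Measure.quasiMeasurePreserving_fst.ae (ae_restrict_mem measurableSet_uIoc)
  have hx : ∀ᵐ p ∂(volume.restrict (uIoc 0 a)).prod μ, 0 ≤ p.2 :=
    Measure.quasiMeasurePreserving_snd.ae hμ
  have : IsFiniteMeasure (volume.restrict (uIoc 0 a)) := isFiniteMeasure_restrict.mpr (by simp)
  refine (integrable_const (1 : ℝ)).mono' (Measurable.aestronglyMeasurable (by fun_prop)) ?_
  filter_upwards [hy, hx] with p hp1 hp2
  rw [uIoc_of_le ha] at hp1
  calc |p.2 / (1 + (p.1 + 1) * p.2)| ≤ (p.1 + 1)⁻¹ :=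
        abs_div_one_add_mul_le (by linarith [hp1.1]) hp2
    _ ≤ 1 := inv_le_one_of_one_le₀ (by linarith [hp1.1])

lemma integral_div_one_add_mul {x a : ℝ} (hx : 0 ≤ x) (ha : 0 ≤ a) :
    ∫ y in 0..a, x / (1 + (y + 1) * x) = Real.log (1 + a * x / (1 + x)) := by
  have hpos : ∀ y ∈ uIcc 0 a, 0 < 1 + (y + 1) * x := fun y hy => by
    rw [uIcc_of_le ha] at hy
    nlinarith [hy.1]
  have hderiv : ∀ y ∈ uIcc 0 a,
      HasDerivAt (fun y => Real.log (1 + (y + 1) * x)) (x / (1 + (y + 1) * x)) y := by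
    intro y hy
    simpa using (((hasDerivAt_id y).add_const 1).mul_const x).const_add 1 |>.log (hpos y hy).ne'
  have hint : IntervalIntegrable (fun y => x / (1 + (y + 1) * x)) volume 0 a :=
    (continuousOn_const.div (by fun_prop) fun y hy => (hpos y hy).ne').intervalIntegrable
  rw [intervalIntegral.integral_eq_sub_of_hasDerivAt hderiv hint,
    ← Real.log_div (hpos a right_mem_uIcc).ne' (hpos 0 left_mem_uIcc).ne']
  congr 1
  field_simp
  ring

lemma integral_one_div_add_one {a : ℝ} (ha : -1 < a) :
    ∫ y in 0..a, 1 / (y + 1) = Real.log (1 + a) := by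
  rw [intervalIntegral.integral_comp_add_right (fun y => 1 / y),
    integral_one_div_of_pos (by norm_num) (by linarith)]
  simp [add_comm]

lemma mul_integral_inv_sub_eq {μ : Measure ℝ} [IsProbabilityMeasure μ]
    (hμ : ∀ᵐ x ∂μ, 0 ≤ x) {c : ℝ} (hc : 0 < c) :
    1 / c ^ 2 * ∫ x, (-(1 / c) - x)⁻¹ ∂μ = ∫ x, x / (1 + c * x) ∂μ - 1 / c := by
  calc 1 / c ^ 2 * ∫ x, (-(1 / c) - x)⁻¹ ∂μ = ∫ x, (x / (1 + c * x) - 1 / c) ∂μ := by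
        rw [← integral_const_mul]
        refine integral_congr_ae (hμ.mono fun x hx => ?_)
        dsimp only
        rw [div_one_add_mul_eq hc.ne' (by positivity)]
        ring
    _ = ∫ x, x / (1 + c * x) ∂μ - 1 / c := by
        rw [integral_sub (integrable_div_one_add_mul hμ hc) (integrable_const _)]
        simp

/-- For a random variable supported on `[0,∞)` with law `μ` and Cauchy
transform `G(z) = ∫ (z−x)⁻¹ dμ(x)` (for `z < 0`), and any `a > 0`,
`∫ log(1 + a·x/(1+x)) dμ(x) = log(1+a) + ∫_0^a (y+1)⁻² G(−1/(y+1)) dy`. -/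
theorem stmt4 (μ : Measure ℝ) [IsProbabilityMeasure μ]
    (hsupp : ∀ᵐ x ∂μ, 0 ≤ x)
    (G : ℝ → ℝ) (hG : ∀ z < (0 : ℝ), G z = ∫ x, (z - x)⁻¹ ∂μ)
    (a : ℝ) (ha : 0 < a) :
    ∫ x, Real.log (1 + a * x / (1 + x)) ∂μ
      = Real.log (1 + a)
        + ∫ y in (0 : ℝ)..a, (1 / (y + 1) ^ 2) * G (-(1 / (y + 1))) := by
  have hprod := integrable_div_one_add_mul_prod hsupp ha.le
  have hF : IntervalIntegrable (fun y => ∫ x, x / (1 + (y + 1) * x) ∂μ) volume 0 a :=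
    intervalIntegrable_iff.mpr hprod.integral_prod_left
  have hinv : IntervalIntegrable (fun y : ℝ => 1 / (y + 1)) volume 0 a :=
    (continuousOn_const.div (by fun_prop) fun y hy => by
      rw [uIcc_of_le ha.le] at hy; linarith [hy.1]).intervalIntegrable
  have hcauchy : ∀ y ∈ uIcc 0 a, 1 / (y + 1) ^ 2 * G (-(1 / (y + 1)))
      = ∫ x, x / (1 + (y + 1) * x) ∂μ - 1 / (y + 1) := fun y hy => by
    rw [uIcc_of_le ha.le] at hy
    have hy1 : 0 < y + 1 := by linarith [hy.1]
    rw [hG _ (by simpa using hy1), mul_integral_inv_sub_eq hsupp hy1]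
  calc ∫ x, Real.log (1 + a * x / (1 + x)) ∂μ
      = ∫ x, (∫ y in 0..a, x / (1 + (y + 1) * x)) ∂μ :=
        integral_congr_ae (hsupp.mono fun x hx => (integral_div_one_add_mul hx ha.le).symm)
    _ = ∫ y in 0..a, ∫ x, x / (1 + (y + 1) * x) ∂μ :=
        (intervalIntegral_integral_swap hprod).symm
    _ = (∫ y in 0..a, 1 / (y + 1))
          + ∫ y in 0..a, (∫ x, x / (1 + (y + 1) * x) ∂μ - 1 / (y + 1)) := by
        rw [intervalIntegral.integral_sub hF hinv]
        ring
    _ = _ := by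
        rw [integral_one_div_add_one (by linarith), intervalIntegral.integral_congr hcauchy]
end

section
/- For positive integers M1 ≤ M2, N with M1+M2 > N and M2 ≥ N or M2 < N, set Q = N·M1 + N·M2 + M1·M2 − N^2 and S = M1+M2−N. The function G(z) = [M1 − N + 2M1 z + M2 z − N z + sqrt((M1−N)^2 − 2Qz + (M2−N)^2 z^2)] / (2 M1 z (z+1)) (for z ≠ 0, −1) satisfies the system: e11 = M1/(z − e12), e12 = −N/(e22 + e11), e22 = −M2/(1 + e12), with G(z) = e11/M1, i.e., G is the solution of the corresponding ternary quadratic equation system. -/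
/-!
Eliminating `e12` and `e22` reduces the system to a quadratic equation for `e11`, whose roots are
`M1 G(z)` for the two signs of the square root of `Δ(z) = (M1 - N)² - 2Qz + (M2 - N)² z²`; with the
root fixed, `e12` and `e22` are explicit rational functions of `z` and `√Δ(z)`. The only analytic
input is that their denominators, both of the form `v + √Δ(z)`, do not vanish: `Δ(z) - v²` is an
explicit nonzero multiple of `z` (resp. `z (z + 1)`), so `√Δ(z) ≠ -v`.
-/

/-- `Δ(z)` with `(a, b, n) = (M1, M2, N)` and `Q` expanded. -/
def disc (a b n z : ℝ) : ℝ :=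
  (a - n) ^ 2 - 2 * (n * a + n * b + a * b - n ^ 2) * z + (b - n) ^ 2 * z ^ 2

lemma disc_eq_sq_sub (a b n z : ℝ) :
    disc a b n z = (a - n + (b - n) * z) ^ 2 - 4 * a * b * z := by
  unfold disc; ring

lemma disc_eq_sq_sub' (a b n z : ℝ) :
    disc a b n z = (a - n + (2 * a + b - n) * z) ^ 2 - 4 * a * (a + b - n) * (z * (z + 1)) := by
  unfold disc; ring

lemma add_sqrt_ne_zero {v d : ℝ} (hd : 0 ≤ d) (h : d ≠ v ^ 2) : v + √d ≠ 0 := by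
  intro h0
  apply h
  rw [← Real.sq_sqrt hd, show √d = -v by linarith, neg_sq]

section

variable {a b n z : ℝ}

lemma disc_nonneg (ha : 0 ≤ a) (hb : 0 ≤ b) (hz : z ≤ 0) : 0 ≤ disc a b n z := by
  rw [disc_eq_sq_sub]
  nlinarith [sq_nonneg (a - n + (b - n) * z), mul_nonneg ha hb]

lemma add_sqrt_disc_ne_zero (hd : 0 ≤ disc a b n z) (ha : a ≠ 0) (hb : b ≠ 0) (hz : z ≠ 0) :
    a - n + (b - n) * z + √(disc a b n z) ≠ 0 := by
  refine add_sqrt_ne_zero hd fun h => ?_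
  rw [disc_eq_sq_sub] at h
  have : 4 * a * b * z ≠ 0 := by simp [ha, hb, hz]
  exact this (by linarith)

lemma add_sqrt_disc_ne_zero' (hd : 0 ≤ disc a b n z) (ha : a ≠ 0) (hn : n ≠ a + b)
    (hz : z ≠ 0) (hz1 : z + 1 ≠ 0) :
    a - n + (2 * a + b - n) * z + √(disc a b n z) ≠ 0 := by
  refine add_sqrt_ne_zero hd fun h => ?_
  rw [disc_eq_sq_sub'] at h
  have : 4 * a * (a + b - n) * (z * (z + 1)) ≠ 0 := by
    simp [ha, sub_ne_zero.mpr hn.symm, hz, hz1]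
  exact this (by linarith)

theorem exists_fixedPoint_of_sq_eq_disc {s : ℝ} (hz : z ≠ 0) (hz1 : z + 1 ≠ 0)
    (hs : s ^ 2 = disc a b n z) (hW : a - n + (b - n) * z + s ≠ 0)
    (hN : a - n + (2 * a + b - n) * z + s ≠ 0) :
    ∃ e12 e22 : ℝ,
      (a - n + (2 * a + b - n) * z + s) / (2 * z * (z + 1)) * (z - e12) = a ∧
      e12 * (e22 + (a - n + (2 * a + b - n) * z + s) / (2 * z * (z + 1))) = -n ∧
      e22 * (1 + e12) = -b := by
  unfold disc at hs
  set W := a - n + (b - n) * z + s with hWdef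
  set N0 := a - n + (2 * a + b - n) * z + s with hNdef
  refine ⟨z * ((b - n) * z - a - n + s) / N0, -b * N0 / ((z + 1) * W), ?_, ?_, ?_⟩
  · field_simp
    ring
  · field_simp
    rw [hWdef]
    linear_combination hs
  · field_simp
    rw [hNdef, hWdef]
    ring

end

/-- With `Q = N M1 + N M2 + M1 M2 − N²`, the function
`G(z) = [M1−N+2M1 z+M2 z−N z+√((M1−N)²−2Qz+(M2−N)² z²)]/(2 M1 z (z+1))`
satisfies the fixed-point system `e11 = M1/(z−e12)`, `e12 = −N/(e22+e11)`,
`e22 = −M2/(1+e12)` with `e11 = M1 G(z)` (equations written in product form,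
which asserts the denominators are nonzero). -/
theorem stmt7 {M1 M2 N : ℕ} (h1 : 0 < M1) (hle : M1 ≤ M2) (h3 : N < M1 + M2)
    (Q : ℝ) (hQ : Q = N * M1 + N * M2 + M1 * M2 - (N : ℝ) ^ 2)
    (G : ℝ → ℝ)
    (hGdef : ∀ z : ℝ, z ≠ 0 → z ≠ -1 →
      G z = ((M1 : ℝ) - N + 2 * M1 * z + M2 * z - N * z
          + Real.sqrt (((M1 : ℝ) - N) ^ 2 - 2 * Q * z + ((M2 : ℝ) - N) ^ 2 * z ^ 2))
        / (2 * M1 * z * (z + 1)))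
    (z : ℝ) (hz : z < 0) (hz1 : z ≠ -1) :
    ∃ e11 e12 e22 : ℝ,
      e11 = M1 * G z ∧
      e11 * (z - e12) = M1 ∧
      e12 * (e22 + e11) = -(N : ℝ) ∧
      e22 * (1 + e12) = -(M2 : ℝ) := by
  subst hQ
  have ha : (0 : ℝ) < M1 := by exact_mod_cast h1
  have hb : (0 : ℝ) < M2 := by exact_mod_cast h1.trans_le hle
  have hn : (N : ℝ) ≠ M1 + M2 := by exact_mod_cast h3.ne
  have hz0 : z ≠ 0 := hz.ne
  have hz1' : z + 1 ≠ 0 := fun h => hz1 (by linarith)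
  have hd : 0 ≤ disc M1 M2 N z := disc_nonneg ha.le hb.le hz.le
  obtain ⟨e12, e22, h⟩ := exists_fixedPoint_of_sq_eq_disc hz0 hz1' (Real.sq_sqrt hd)
    (add_sqrt_disc_ne_zero hd ha.ne' hb.ne' hz0) (add_sqrt_disc_ne_zero' hd ha.ne' hn hz0 hz1')
  refine ⟨_, e12, e22, ?_, h⟩
  rw [hGdef z hz0 hz1, disc]
  field_simp
  ring
end

section
/- Under Rayleigh fading with antenna numbers M1 ≤ M2, M1+M2 > N, the asymptotic Cauchy transform of L at z = −1 equals G_L(−1) = −(M1+M2−N)/(M1+M2). -/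
/-!
Multiplying numerator and denominator by the conjugate `√Δ(z) − A(z)`, where
`A(z) = M1 − N + (2M1 + M2 − N) z` is the linear part of the numerator, turns the numerator into
`Δ(z) − A(z)² = −4 M1 (M1 + M2 − N) z (z + 1)`. The factor `z (z + 1)` cancels against the
denominator, leaving `−2 (M1 + M2 − N) / (√Δ(z) − A(z))`, which is continuous at `z = −1`
because `Δ(−1) = (M1 + M2)²` and `A(−1) = −(M1 + M2)`.
-/

open Filter Topology

namespace RayleighCauchyTransform

-- `a`, `b`, `n` play the roles of `M1`, `M2`, `N`.
variable (a b n : ℝ)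

def disc (z : ℝ) : ℝ :=
  (a - n) ^ 2 - 2 * (n * a + n * b + a * b - n ^ 2) * z + (b - n) ^ 2 * z ^ 2

def lin (z : ℝ) : ℝ := a - n + 2 * a * z + b * z - n * z

noncomputable def cauchyTransform (z : ℝ) : ℝ :=
  (lin a b n z + Real.sqrt (disc a b n z)) / (2 * a * z * (z + 1))

noncomputable def conjForm (z : ℝ) : ℝ :=
  -2 * (a + b - n) / (Real.sqrt (disc a b n z) - lin a b n z)

lemma disc_sub_lin_sq (z : ℝ) :
    disc a b n z - lin a b n z ^ 2 = -4 * a * (a + b - n) * z * (z + 1) := by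
  unfold disc lin; ring

lemma disc_neg_one : disc a b n (-1) = (a + b) ^ 2 := by unfold disc; ring

lemma lin_neg_one : lin a b n (-1) = -(a + b) := by unfold lin; ring

lemma continuous_disc : Continuous (disc a b n) := by unfold disc; fun_prop

lemma continuous_lin : Continuous (lin a b n) := by unfold lin; fun_prop

lemma continuous_sqrt_disc_sub_lin :
    Continuous fun z => Real.sqrt (disc a b n z) - lin a b n z :=
  (continuous_disc a b n).sqrt.sub (continuous_lin a b n)

variable {a b}

lemma sqrt_disc_sub_lin_neg_one (hab : 0 ≤ a + b) :
    Real.sqrt (disc a b n (-1)) - lin a b n (-1) = 2 * (a + b) := by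
  rw [disc_neg_one, lin_neg_one, Real.sqrt_sq hab]; ring

lemma cauchyTransform_eq_conjForm {z : ℝ} (ha : a ≠ 0) (hz0 : z ≠ 0) (hz1 : z ≠ -1)
    (hdisc : 0 ≤ disc a b n z) (hconj : Real.sqrt (disc a b n z) - lin a b n z ≠ 0) :
    cauchyTransform a b n z = conjForm a b n z := by
  have hden : 2 * a * z * (z + 1) ≠ 0 := by
    have : z + 1 ≠ 0 := fun h => hz1 (eq_neg_of_add_eq_zero_left h)
    positivity
  rw [cauchyTransform, conjForm, div_eq_div_iff hden hconj]
  linear_combination Real.sq_sqrt hdisc + disc_sub_lin_sq a b n z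

lemma continuousAt_conjForm (hab : 0 < a + b) : ContinuousAt (conjForm a b n) (-1) := by
  refine continuousAt_const.div (continuous_sqrt_disc_sub_lin a b n).continuousAt ?_
  rw [sqrt_disc_sub_lin_neg_one n hab.le]
  positivity

lemma conjForm_neg_one (hab : 0 < a + b) :
    conjForm a b n (-1) = -((a + b - n) / (a + b)) := by
  rw [conjForm, sqrt_disc_sub_lin_neg_one n hab.le]
  field_simp

lemma cauchyTransform_eventuallyEq_conjForm (ha : a ≠ 0) (hab : 0 < a + b) :
    cauchyTransform a b n =ᶠ[𝓝[({-1, 0} : Set ℝ)ᶜ] (-1)] conjForm a b n := by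
  have hdisc : ∀ᶠ z in 𝓝 (-1), 0 < disc a b n z :=
    (continuous_disc a b n).continuousAt.eventually_const_lt
      (by rw [disc_neg_one]; positivity)
  have hconj : ∀ᶠ z in 𝓝 (-1), Real.sqrt (disc a b n z) - lin a b n z ≠ 0 :=
    (continuous_sqrt_disc_sub_lin a b n).continuousAt.eventually_ne
      (by rw [sqrt_disc_sub_lin_neg_one n hab.le]; positivity)
  filter_upwards [eventually_nhdsWithin_of_eventually_nhds (hdisc.and hconj),
    self_mem_nhdsWithin] with z ⟨hdz, hcz⟩ hz
  simp only [Set.mem_compl_iff, Set.mem_insert_iff, Set.mem_singleton_iff, not_or] at hz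
  exact cauchyTransform_eq_conjForm n ha hz.2 hz.1 hdz.le hcz

theorem tendsto_cauchyTransform_neg_one (ha : a ≠ 0) (hab : 0 < a + b) :
    Tendsto (cauchyTransform a b n) (𝓝[({-1, 0} : Set ℝ)ᶜ] (-1))
      (𝓝 (-((a + b - n) / (a + b)))) := by
  rw [← conjForm_neg_one n hab]
  exact (continuousAt_conjForm n hab).tendsto.mono_left nhdsWithin_le_nhds
    |>.congr' (cauchyTransform_eventuallyEq_conjForm n ha hab).symm

end RayleighCauchyTransform

theorem stmt8_general {M1 M2 N : ℕ} (h1 : 0 < M1)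
    (Q : ℝ) (hQ : Q = N * M1 + N * M2 + M1 * M2 - (N : ℝ) ^ 2) :
    Tendsto (fun z : ℝ =>
        ((M1 : ℝ) - N + 2 * M1 * z + M2 * z - N * z
          + Real.sqrt (((M1 : ℝ) - N) ^ 2 - 2 * Q * z + ((M2 : ℝ) - N) ^ 2 * z ^ 2))
        / (2 * M1 * z * (z + 1)))
      (nhdsWithin (-1) ({-1, 0} : Set ℝ)ᶜ)
      (nhds (-(((M1 : ℝ) + M2 - N) / ((M1 : ℝ) + M2)))) := by
  subst hQ
  have hM1 : (0 : ℝ) < M1 := Nat.cast_pos.mpr h1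
  exact RayleighCauchyTransform.tendsto_cauchyTransform_neg_one N hM1.ne'
    (add_pos_of_pos_of_nonneg hM1 M2.cast_nonneg)

/-- Under Rayleigh fading with `M1 ≤ M2`, `M1+M2 > N`, the limiting
Cauchy transform `G_L(z) = [M1−N+2M1 z+M2 z−N z+√Δ(z)]/(2M1 z(z+1))`, with
`Δ(z) = (M1−N)² − 2Qz + (M2−N)² z²` and `Q = N M1+N M2+M1 M2−N²`, extends
continuously to `z = −1` with value `G_L(−1) = −(M1+M2−N)/(M1+M2)`. -/
theorem stmt8 {M1 M2 N : ℕ} (h1 : 0 < M1) (hle : M1 ≤ M2) (h3 : N < M1 + M2)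
    (Q : ℝ) (hQ : Q = N * M1 + N * M2 + M1 * M2 - (N : ℝ) ^ 2) :
    Tendsto (fun z : ℝ =>
        ((M1 : ℝ) - N + 2 * M1 * z + M2 * z - N * z
          + Real.sqrt (((M1 : ℝ) - N) ^ 2 - 2 * Q * z + ((M2 : ℝ) - N) ^ 2 * z ^ 2))
        / (2 * M1 * z * (z + 1)))
      (nhdsWithin (-1) ({-1, 0} : Set ℝ)ᶜ)
      (nhds (-(((M1 : ℝ) + M2 - N) / ((M1 : ℝ) + M2)))) :=
  stmt8_general h1 Q hQ
end

section
/- Let X1 = [[0, H1],[H1^H, 0]] ∈ C^{n×n} and X2 the n×n matrix with H2 embedded in its lower-right M2×N block (zeros elsewhere). Then X1 − X2^H X2 = [[0, H1],[H1^H, −H2^H H2]], and this matrix equals −(X2^H, 0, I_n) · M^{-1} · (X2; 0; I_n)^T, where M is the 3n×3n block matrix [[I_n, 0, 0],[0, X1, −I_n],[0, −I_n, 0]]. -/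
/-!
The first identity is a block computation: `X₂ᴴ X₂` only sees the lower-right block `H₂ᴴ H₂`.
For the second, the inverse of the pencil `[[X, -I], [-I, 0]]` is `[[0, -I], [-I, -X]]`, so
`(Y, 0, I) M⁻¹ (Z; 0; I) = Y Z - X`: the linearization recovers `X - Y Z` as a Schur complement.
-/

open Matrix

namespace Matrix

variable {k l m n α : Type*}

theorem fromBlocks_zero_zero_zero_conjTranspose_mul_self [Fintype l] [Fintype m] [Semiring α]
    [StarRing α] (H : Matrix m n α) :
    (fromBlocks 0 0 0 H : Matrix (l ⊕ m) (k ⊕ n) α)ᴴ *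
        (fromBlocks 0 0 0 H : Matrix (l ⊕ m) (k ⊕ n) α) =
      fromBlocks 0 0 0 (Hᴴ * H) := by
  rw [fromBlocks_conjTranspose, fromBlocks_multiply]
  simp

variable [Fintype k] [Fintype n] [DecidableEq k] [DecidableEq n]

theorem fromBlocks_neg_one_mul_fromBlocks_neg_one [Ring α] (X : Matrix n n α) :
    fromBlocks X (-1) (-1) 0 * fromBlocks 0 (-1) (-1) (-X) = 1 := by
  simp [fromBlocks_multiply, fromBlocks_one]

theorem inv_fromBlocks_one_zero_zero_fromBlocks_neg_one [CommRing α] (X : Matrix n n α) :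
    (fromBlocks (1 : Matrix k k α) 0 0 (fromBlocks X (-1) (-1) 0))⁻¹ =
      fromBlocks 1 0 0 (fromBlocks 0 (-1) (-1) (-X)) :=
  inv_eq_right_inv <| by
    rw [fromBlocks_multiply, fromBlocks_neg_one_mul_fromBlocks_neg_one]
    simp [fromBlocks_one]

theorem neg_fromCols_mul_fromBlocks_mul_fromRows [Ring α] (X : Matrix n n α) (Y : Matrix n k α)
    (Z : Matrix k n α) :
    -((fromCols Y (fromCols 0 1) : Matrix n (k ⊕ (n ⊕ n)) α) *
        (fromBlocks 1 0 0 (fromBlocks 0 (-1) (-1) (-X)) : Matrix (k ⊕ (n ⊕ n)) (k ⊕ (n ⊕ n)) α) *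
        (fromRows Z (fromRows 0 1) : Matrix (k ⊕ (n ⊕ n)) n α)) = X - Y * Z := by
  simp only [fromCols_mul_fromBlocks, fromCols_mul_fromRows, Matrix.mul_one, Matrix.mul_zero,
    Matrix.one_mul, mul_zero, mul_neg, mul_one, add_zero, zero_add, neg_zero, neg_add_rev, neg_neg]
  abel

end Matrix

theorem stmt13_general {M1 M2 N K : ℕ}
    (H1 : Matrix (Fin M1) (Fin N) ℂ) (H2 : Matrix (Fin M2) (Fin N) ℂ)
    (X1 : Matrix (Fin M1 ⊕ Fin N) (Fin M1 ⊕ Fin N) ℂ)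
    (hX1 : X1 = Matrix.fromBlocks 0 H1 H1ᴴ 0)
    (X2 : Matrix (Fin K ⊕ Fin M2) (Fin M1 ⊕ Fin N) ℂ)
    (hX2 : X2 = Matrix.fromBlocks 0 0 0 H2)
    (M : Matrix ((Fin K ⊕ Fin M2) ⊕ ((Fin M1 ⊕ Fin N) ⊕ (Fin M1 ⊕ Fin N)))
        ((Fin K ⊕ Fin M2) ⊕ ((Fin M1 ⊕ Fin N) ⊕ (Fin M1 ⊕ Fin N))) ℂ)
    (hM : M = Matrix.fromBlocks 1 0 0 (Matrix.fromBlocks X1 (-1) (-1) 0))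
    (R : Matrix (Fin M1 ⊕ Fin N)
        ((Fin K ⊕ Fin M2) ⊕ ((Fin M1 ⊕ Fin N) ⊕ (Fin M1 ⊕ Fin N))) ℂ)
    (hR : R = Matrix.fromCols X2ᴴ (Matrix.fromCols 0 1))
    (C : Matrix ((Fin K ⊕ Fin M2) ⊕ ((Fin M1 ⊕ Fin N) ⊕ (Fin M1 ⊕ Fin N)))
        (Fin M1 ⊕ Fin N) ℂ)
    (hC : C = Matrix.fromRows X2 (Matrix.fromRows 0 1)) :
    X1 - X2ᴴ * X2 = Matrix.fromBlocks 0 H1 H1ᴴ (-(H2ᴴ * H2)) ∧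
    X1 - X2ᴴ * X2 = -(R * M⁻¹ * C) := by
  constructor
  · rw [hX1, hX2, fromBlocks_zero_zero_zero_conjTranspose_mul_self, sub_eq_add_neg,
      fromBlocks_neg, fromBlocks_add]
    simp
  · rw [hM, hR, hC, inv_fromBlocks_one_zero_zero_fromBlocks_neg_one,
      neg_fromCols_mul_fromBlocks_mul_fromRows]

/-- With `X1 = [[0, H1],[H1ᴴ, 0]]` (size `n = M1+N`) and `X2` the
`n×n` matrix with `H2` in its lower-right `M2×N` block (zeros elsewhere, row split
`(n−M2, M2)`), one has `X1 − X2ᴴ X2 = [[0, H1],[H1ᴴ, −H2ᴴ H2]]`, and this matrix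
equals `−(X2ᴴ, 0, I) M⁻¹ (X2; 0; I)` where `M = [[I,0,0],[0,X1,−I],[0,−I,0]]`. -/
theorem stmt13 {M1 M2 N K : ℕ} (hK : K + M2 = M1 + N)
    (H1 : Matrix (Fin M1) (Fin N) ℂ) (H2 : Matrix (Fin M2) (Fin N) ℂ)
    (X1 : Matrix (Fin M1 ⊕ Fin N) (Fin M1 ⊕ Fin N) ℂ)
    (hX1 : X1 = Matrix.fromBlocks 0 H1 H1ᴴ 0)
    (X2 : Matrix (Fin K ⊕ Fin M2) (Fin M1 ⊕ Fin N) ℂ)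
    (hX2 : X2 = Matrix.fromBlocks 0 0 0 H2)
    (M : Matrix ((Fin K ⊕ Fin M2) ⊕ ((Fin M1 ⊕ Fin N) ⊕ (Fin M1 ⊕ Fin N)))
        ((Fin K ⊕ Fin M2) ⊕ ((Fin M1 ⊕ Fin N) ⊕ (Fin M1 ⊕ Fin N))) ℂ)
    (hM : M = Matrix.fromBlocks 1 0 0 (Matrix.fromBlocks X1 (-1) (-1) 0))
    (R : Matrix (Fin M1 ⊕ Fin N)
        ((Fin K ⊕ Fin M2) ⊕ ((Fin M1 ⊕ Fin N) ⊕ (Fin M1 ⊕ Fin N))) ℂ)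
    (hR : R = Matrix.fromCols X2ᴴ (Matrix.fromCols 0 1))
    (C : Matrix ((Fin K ⊕ Fin M2) ⊕ ((Fin M1 ⊕ Fin N) ⊕ (Fin M1 ⊕ Fin N)))
        (Fin M1 ⊕ Fin N) ℂ)
    (hC : C = Matrix.fromRows X2 (Matrix.fromRows 0 1)) :
    X1 - X2ᴴ * X2 = Matrix.fromBlocks 0 H1 H1ᴴ (-(H2ᴴ * H2)) ∧
    X1 - X2ᴴ * X2 = -(R * M⁻¹ * C) :=
  stmt13_general H1 H2 X1 hX1 X2 hX2 M hM R hR C hC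
end

section
/- Let G(z) = [M1 − N + (2M1+M2−N) z + √Δ(z)]/(2 M1 z (z+1)) with Δ(z) = (M1−N)^2 − 2Qz + (M2−N)^2 z^2, Q = N M1+N M2+M1 M2−N^2. Then an antiderivative of G on an interval of negative reals avoiding −1 and where Δ > 0 is given by I(a,b) = ((M1−N)/(2M1)) log(b/a) + (1/(2M1))(I1+I2+I3), where I1 = −|M1−N| log( (a/b) · [(M1−N)^2 − Qb + |M1−N|√Δ(b)]/[(M1−N)^2 − Qa + |M1−N|√Δ(a)] ), I2 = −|M2−N| log( [Q−(M2−N)^2 b + |M2−N|√Δ(b)]/[Q−(M2−N)^2 a + |M2−N|√Δ(a)] ), I3 = (M1+M2) log( [Q1 − Q2 b + (M1+M2)√Δ(b)]/[Q1 − Q2 a + (M1+M2)√Δ(a)] ), with Q1 = M1^2+M1M2+NM2−NM1, Q2 = M2^2+M1M2+NM1−NM2. I.e., d/db I(a,b) = G(b). -/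
/-!
`G` integrates in closed form by Euler's substitution. For a quadratic
`q(t) = q(t₀) + D (t - t₀) + C (t - t₀)²` with `q(t₀) = r²` and `C = c²`, the numerators
`E(t) = r² + (D/2)(t - t₀) + r √q(t)` and `F(t) = -(D/2 + C (t - t₀)) + c √q(t)`
have logarithmic derivatives `(1 - r/√q)/(t - t₀)` and `-c/√q`. Expanding `Δ` at `t₀ = 0`
and at `t₀ = -1`, where `Δ(0) = (M1 - N)²` and `Δ(-1) = (M1 + M2)²`, makes `num1` and `num3`
numerators of the first kind and `num2` one of the second, so `I'` is a rational function
of `b` and `√Δ(b)`; it reduces to `G(b)` using `√Δ(b)² = Δ(b)`.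
-/

open Real

theorem hasDerivAt_log_div_const {f : ℝ → ℝ} {x L k : ℝ} (hf : HasDerivAt f (f x * L) x)
    (hfx : f x ≠ 0) (hk : k ≠ 0) : HasDerivAt (fun y => log (f y / k)) L x :=
  ((hf.div_const k).log (div_ne_zero hfx hk)).congr_deriv (by field_simp)

theorem HasDerivAt.mul_of_logDeriv {f g : ℝ → ℝ} {x L M : ℝ} (hf : HasDerivAt f (f x * L) x)
    (hg : HasDerivAt g (g x * M) x) :
    HasDerivAt (fun y => f y * g y) (f x * g x * (L + M)) x :=
  (hf.mul hg).congr_deriv (by ring)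

section Quadratic

variable {q : ℝ → ℝ} {A D C t₀ x : ℝ}

theorem hasDerivAt_sqrt_quadratic (hq : ∀ y, q y = A + D * (y - t₀) + C * (y - t₀) ^ 2)
    (hx : 0 < q x) :
    HasDerivAt (fun y => √(q y)) ((D + 2 * C * (x - t₀)) / (2 * √(q x))) x := by
  have hq' : HasDerivAt q (D + 2 * C * (x - t₀)) x := by
    rw [funext hq]
    have hu := (hasDerivAt_id x).sub_const t₀
    exact (((hu.const_mul D).const_add A).add ((hu.pow 2).const_mul C)).congr_deriv
      (by simp; ring)
  exact hq'.sqrt hx.ne'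

theorem hasDerivAt_euler_numerator (hq : ∀ y, q y = A + D * (y - t₀) + C * (y - t₀) ^ 2)
    {r : ℝ} (hr : r ^ 2 = A) {E : ℝ → ℝ} (hE : ∀ y, E y = r ^ 2 + D / 2 * (y - t₀) + r * √(q y))
    (hx : 0 < q x) (hxt : x ≠ t₀) :
    HasDerivAt E (E x * ((1 - r / √(q x)) / (x - t₀))) x := by
  have hs : 0 < √(q x) := sqrt_pos.mpr hx
  have hs2 : √(q x) ^ 2 = A + D * (x - t₀) + C * (x - t₀) ^ 2 := by rw [sq_sqrt hx.le, hq]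
  have hu : x - t₀ ≠ 0 := sub_ne_zero.mpr hxt
  rw [funext hE]
  refine (((((hasDerivAt_id x).sub_const t₀).const_mul (D / 2)).const_add (r ^ 2)).add
    ((hasDerivAt_sqrt_quadratic hq hx).const_mul r)).congr_deriv ?_
  field_simp
  linear_combination (-2 * r) * hs2 + 2 * r * hr

theorem hasDerivAt_euler_numerator_at_infty
    (hq : ∀ y, q y = A + D * (y - t₀) + C * (y - t₀) ^ 2) {c : ℝ} (hc : c ^ 2 = C)
    {F : ℝ → ℝ} (hF : ∀ y, F y = -(D / 2 + C * (y - t₀)) + c * √(q y)) (hx : 0 < q x) :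
    HasDerivAt F (F x * -(c / √(q x))) x := by
  have hs : 0 < √(q x) := sqrt_pos.mpr hx
  rw [funext hF]
  refine ((((((hasDerivAt_id x).sub_const t₀).const_mul C).const_add (D / 2)).neg).add
    ((hasDerivAt_sqrt_quadratic hq hx).const_mul c)).congr_deriv ?_
  field_simp
  linear_combination (2 * √(q x)) * hc

end Quadratic

theorem cauchyTransform_eq_sum_logDeriv {m₁ m₂ n b s : ℝ} (hm₁ : m₁ ≠ 0) (hb : b ≠ 0)
    (hb₁ : b + 1 ≠ 0) (hs : s ≠ 0)
    (hs2 : s ^ 2 =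
      (m₁ - n) ^ 2 - 2 * (n * m₁ + n * m₂ + m₁ * m₂ - n ^ 2) * b + (m₂ - n) ^ 2 * b ^ 2) :
    (m₁ - n) / (2 * m₁) * (1 / b) + 1 / (2 * m₁) *
      (-|m₁ - n| * (-1 / b + (1 - |m₁ - n| / s) / b) + -|m₂ - n| * -(|m₂ - n| / s)
        + (m₁ + m₂) * ((1 - (m₁ + m₂) / s) / (b + 1)))
      = (m₁ - n + (2 * m₁ + m₂ - n) * b + s) / (2 * m₁ * b * (b + 1)) := by
  field_simp
  linear_combination -hs2 + (b + 1) * sq_abs (m₁ - n) + (b + b ^ 2) * sq_abs (m₂ - n)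

theorem stmt16_general {M1 M2 N : ℕ} (hM1 : 0 < M1)
    (Q Q1 Q2 : ℝ)
    (hQ : Q = N * M1 + N * M2 + M1 * M2 - (N : ℝ) ^ 2)
    (hQ1 : Q1 = (M1 : ℝ) ^ 2 + M1 * M2 + N * M2 - N * M1)
    (hQ2 : Q2 = (M2 : ℝ) ^ 2 + M1 * M2 + N * M1 - N * M2)
    (Δ num1 num2 num3 G : ℝ → ℝ)
    (hΔ : ∀ t, Δ t = ((M1 : ℝ) - N) ^ 2 - 2 * Q * t + ((M2 : ℝ) - N) ^ 2 * t ^ 2)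
    (hnum1 : ∀ t, num1 t = ((M1 : ℝ) - N) ^ 2 - Q * t + |(M1 : ℝ) - N| * Real.sqrt (Δ t))
    (hnum2 : ∀ t, num2 t = Q - ((M2 : ℝ) - N) ^ 2 * t + |(M2 : ℝ) - N| * Real.sqrt (Δ t))
    (hnum3 : ∀ t, num3 t = Q1 - Q2 * t + ((M1 : ℝ) + M2) * Real.sqrt (Δ t))
    (hG : ∀ t, G t = ((M1 : ℝ) - N + (2 * M1 + M2 - N : ℝ) * t + Real.sqrt (Δ t))
        / (2 * M1 * t * (t + 1)))
    (a : ℝ) (ha : a < 0)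
    (hn1a : 0 < num1 a) (hn2a : 0 < num2 a) (hn3a : 0 < num3 a)
    (Ifun : ℝ → ℝ)
    (hIfun : ∀ t, Ifun t =
      (((M1 : ℝ) - N) / (2 * M1)) * Real.log (t / a)
      + (1 / (2 * M1)) *
        ( (-|(M1 : ℝ) - N|) * Real.log ((a / t) * (num1 t / num1 a))
        + (-|(M2 : ℝ) - N|) * Real.log (num2 t / num2 a)
        + ((M1 : ℝ) + M2) * Real.log (num3 t / num3 a) ))
    (b : ℝ) (hb : b < 0) (hb1 : b ≠ -1) (hΔb : 0 < Δ b)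
    (hn1b : 0 < num1 b) (hn2b : 0 < num2 b) (hn3b : 0 < num3 b) :
    HasDerivAt Ifun (G b) b := by
  have hΔ_at_zero : ∀ y,
      Δ y = ((M1 : ℝ) - N) ^ 2 + -2 * Q * (y - 0) + ((M2 : ℝ) - N) ^ 2 * (y - 0) ^ 2 :=
    fun y => by rw [hΔ]; ring
  have hΔ_at_neg_one : ∀ y,
      Δ y = ((M1 : ℝ) + M2) ^ 2 + -2 * Q2 * (y - -1) + ((M2 : ℝ) - N) ^ 2 * (y - -1) ^ 2 :=
    fun y => by rw [hΔ, hQ, hQ2]; ring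
  have hnum1' := hasDerivAt_euler_numerator (E := num1) hΔ_at_zero (sq_abs _)
    (fun y => by rw [hnum1, sq_abs]; ring) hΔb hb.ne
  have hnum2' := hasDerivAt_euler_numerator_at_infty (F := num2) hΔ_at_zero (sq_abs _)
    (fun y => by rw [hnum2]; ring) hΔb
  have hnum3' := hasDerivAt_euler_numerator (E := num3) hΔ_at_neg_one rfl
    (fun y => by rw [hnum3, hQ1, hQ2]; ring) hΔb hb1
  have hinv : HasDerivAt (fun y => a / y) (a / b * (-1 / b)) b :=
    ((hasDerivAt_const b a).div (hasDerivAt_id b) hb.ne).congr_deriv (by simp; ring)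
  have hlog0 : HasDerivAt (fun y => log (y / a)) (1 / b) b :=
    hasDerivAt_log_div_const ((hasDerivAt_id b).congr_deriv (by simp [hb.ne])) hb.ne ha.ne
  have hlog1 := hasDerivAt_log_div_const (hinv.mul_of_logDeriv hnum1')
    (mul_ne_zero (div_ne_zero ha.ne hb.ne) hn1b.ne') hn1a.ne'
  simp only [mul_div_assoc] at hlog1
  have hlog2 := hasDerivAt_log_div_const hnum2' hn2b.ne' hn2a.ne'
  have hlog3 := hasDerivAt_log_div_const hnum3' hn3b.ne' hn3a.ne'
  rw [show Ifun = _ from funext hIfun]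
  refine ((hlog0.const_mul _).add ((((hlog1.const_mul _).add (hlog2.const_mul _)).add
    (hlog3.const_mul _)).const_mul _)).congr_deriv ?_
  rw [hG, sub_zero, sub_neg_eq_add]
  exact cauchyTransform_eq_sum_logDeriv (Nat.cast_ne_zero.mpr hM1.ne') hb.ne
    (by contrapose! hb1; linarith) (sqrt_pos.mpr hΔb).ne'
    (by rw [sq_sqrt hΔb.le, hΔ, hQ])

/-- The closed-form expression `I(a,·)` (sum of logarithmic terms
`I1, I2, I3`) is an antiderivative of the Rayleigh-fading Cauchy transform
`G(z) = [M1−N+(2M1+M2−N)z+√Δ(z)]/(2M1 z(z+1))` on negative reals avoiding `−1`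
where `Δ > 0` and all logarithm arguments are positive: `d/db I(a,b) = G(b)`. -/
theorem stmt16 {M1 M2 N : ℕ} (hM1 : 0 < M1) (hle : M1 ≤ M2) (h3 : N < M1 + M2)
    (Q Q1 Q2 : ℝ)
    (hQ : Q = N * M1 + N * M2 + M1 * M2 - (N : ℝ) ^ 2)
    (hQ1 : Q1 = (M1 : ℝ) ^ 2 + M1 * M2 + N * M2 - N * M1)
    (hQ2 : Q2 = (M2 : ℝ) ^ 2 + M1 * M2 + N * M1 - N * M2)
    (Δ num1 num2 num3 G : ℝ → ℝ)
    (hΔ : ∀ t, Δ t = ((M1 : ℝ) - N) ^ 2 - 2 * Q * t + ((M2 : ℝ) - N) ^ 2 * t ^ 2)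
    (hnum1 : ∀ t, num1 t = ((M1 : ℝ) - N) ^ 2 - Q * t + |(M1 : ℝ) - N| * Real.sqrt (Δ t))
    (hnum2 : ∀ t, num2 t = Q - ((M2 : ℝ) - N) ^ 2 * t + |(M2 : ℝ) - N| * Real.sqrt (Δ t))
    (hnum3 : ∀ t, num3 t = Q1 - Q2 * t + ((M1 : ℝ) + M2) * Real.sqrt (Δ t))
    (hG : ∀ t, G t = ((M1 : ℝ) - N + (2 * M1 + M2 - N : ℝ) * t + Real.sqrt (Δ t))
        / (2 * M1 * t * (t + 1)))
    (a : ℝ) (ha : a < 0) (ha1 : a ≠ -1) (hΔa : 0 < Δ a)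
    (hn1a : 0 < num1 a) (hn2a : 0 < num2 a) (hn3a : 0 < num3 a)
    (Ifun : ℝ → ℝ)
    (hIfun : ∀ t, Ifun t =
      (((M1 : ℝ) - N) / (2 * M1)) * Real.log (t / a)
      + (1 / (2 * M1)) *
        ( (-|(M1 : ℝ) - N|) * Real.log ((a / t) * (num1 t / num1 a))
        + (-|(M2 : ℝ) - N|) * Real.log (num2 t / num2 a)
        + ((M1 : ℝ) + M2) * Real.log (num3 t / num3 a) ))
    (b : ℝ) (hb : b < 0) (hb1 : b ≠ -1) (hΔb : 0 < Δ b)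
    (hn1b : 0 < num1 b) (hn2b : 0 < num2 b) (hn3b : 0 < num3 b) :
    HasDerivAt Ifun (G b) b :=
  stmt16_general hM1 Q Q1 Q2 hQ hQ1 hQ2 Δ num1 num2 num3 G hΔ hnum1 hnum2 hnum3 hG a ha hn1a hn2a
    hn3a Ifun hIfun b hb hb1 hΔb hn1b hn2b hn3b
end

section
/- Consider the scalar system for Rayleigh fading with M2 ≥ N: e11 = M1/(z − e12), e12 = −N/(e22 + e11), e22 = −M2/(1 + e12), for real z < 0. Then e11/M1 = G_L(z) where G_L(z) = [M1−N+2M1 z+M2 z−N z+√((M1−N)^2−2Qz+(M2−N)^2 z^2)]/(2M1 z(z+1)); i.e., solving the system and taking the branch with Im-compatible sign yields the closed form. -/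
/-!
Clearing denominators and eliminating `e12`, `e22` turns the system into the quadratic
`z(z+1) e11² - (M1 - N + 2M1 z + M2 z - N z) e11 + M1(M1 + M2 - N) = 0`, whose discriminant is
`(M1-N)² - 2Qz + (M2-N)² z²`. The branch condition `e11/M1 ∈ (1/z, 0)` gives
`z(z+1) e11² < M1² ≤ M1(M1 + M2 - N)`, and this selects the root with the `+√` sign.
-/

theorem quadratic_root_eq_of_neg_of_lt {a b c x : ℝ} (ha : a ≠ 0)
    (hroot : a * (x * x) + b * x + c = 0) (hx : x < 0) (hlt : a * x ^ 2 < c) :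
    x = (-b + √(discrim a b c)) / (2 * a) := by
  have hpos : 0 < 2 * a * x + b := by
    have hprod : (2 * a * x + b) * x = a * x ^ 2 - c := by linear_combination hroot
    nlinarith
  rw [discrim_eq_sq_of_quadratic_eq_zero hroot, Real.sqrt_sq hpos.le]
  field_simp
  ring

section RayleighSystem

variable {m1 m2 n z e11 e12 e22 : ℝ}

theorem rayleigh_quadratic (h1 : e11 * (z - e12) = m1) (h2 : e12 * (e22 + e11) = -n)
    (h3 : e22 * (1 + e12) = -m2) :
    z * (z + 1) * (e11 * e11) + -(m1 - n + 2 * m1 * z + m2 * z - n * z) * e11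
      + m1 * (m1 + m2 - n) = 0 := by
  linear_combination (e11 + z * e11 + e11 * e12 - m1 + n - m2) * h1
    + (e11 * (1 + e12)) * h2 - (e11 * e12) * h3

theorem rayleigh_cleared (hn : 0 ≤ n) (he11neg : e11 < 0) (hne_div : e11 ≠ m1 / z)
    (he11 : e11 = m1 / (z - e12)) (he12 : e12 = -n / (e22 + e11))
    (he22 : e22 = -m2 / (1 + e12)) :
    e11 * (z - e12) = m1 ∧ e12 * (e22 + e11) = -n ∧ e22 * (1 + e12) = -m2 := by
  have hd1 : z - e12 ≠ 0 := by
    rintro h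
    rw [h, div_zero] at he11
    exact he11neg.ne he11
  have hd2 : e22 + e11 ≠ 0 := by
    rintro h
    rw [h, div_zero] at he12
    rw [he12, sub_zero] at he11
    exact hne_div he11
  have hd3 : 1 + e12 ≠ 0 := by
    rintro h
    rw [h, div_zero] at he22
    have hn' : e12 * e11 = -n := by rw [he12, he22, zero_add]; field_simp [he11neg.ne]
    nlinarith [show e12 = -1 by linarith]
  exact ⟨by rw [he11]; exact div_mul_cancel₀ _ hd1, by rw [he12]; exact div_mul_cancel₀ _ hd2,
    by rw [he22]; exact div_mul_cancel₀ _ hd3⟩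

theorem rayleigh_branch_bound (hz : z < 0) (hm1 : 0 < m1) (hnm2 : n ≤ m2)
    (hbranch : 1 / z < e11 / m1 ∧ e11 / m1 < 0) :
    e11 < 0 ∧ m1 / z < e11 ∧ z * (z + 1) * e11 ^ 2 < m1 * (m1 + m2 - n) := by
  obtain ⟨hlow, hneg⟩ := hbranch
  have he11 : e11 < 0 := by simpa [div_neg_iff, hm1, hm1.not_gt] using hneg
  rw [lt_div_iff₀ hm1, one_div_mul_eq_div] at hlow
  refine ⟨he11, hlow, ?_⟩
  have hze11 : z * e11 < m1 := by
    rw [div_lt_iff_of_neg hz] at hlow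
    linarith
  have hpos : 0 < z * e11 := mul_pos_of_neg_of_neg hz he11
  have hsq : (z * e11) ^ 2 < m1 ^ 2 := by nlinarith
  nlinarith

end RayleighSystem

theorem stmt18_general {M1 M2 N : ℕ} (hM1 : 0 < M1) (hNM2 : N ≤ M2)
    (z : ℝ) (hz : z < 0) (hz1 : z ≠ -1)
    (Q : ℝ) (hQ : Q = N * M1 + N * M2 + M1 * M2 - (N : ℝ) ^ 2)
    (e11 e12 e22 : ℝ)
    (he11 : e11 = (M1 : ℝ) / (z - e12))
    (he12 : e12 = -(N : ℝ) / (e22 + e11))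
    (he22 : e22 = -(M2 : ℝ) / (1 + e12))
    (hbranch : 1 / z < e11 / M1 ∧ e11 / M1 < 0) :
    e11 / M1
      = ((M1 : ℝ) - N + 2 * M1 * z + M2 * z - N * z
          + Real.sqrt (((M1 : ℝ) - N) ^ 2 - 2 * Q * z + ((M2 : ℝ) - N) ^ 2 * z ^ 2))
        / (2 * M1 * z * (z + 1)) := by
  have hM1R : (0 : ℝ) < M1 := by exact_mod_cast hM1
  have hNM2R : (N : ℝ) ≤ M2 := by exact_mod_cast hNM2
  obtain ⟨he11neg, hlow, hlt⟩ := rayleigh_branch_bound hz hM1R hNM2R hbranch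
  obtain ⟨h1, h2, h3⟩ :=
    rayleigh_cleared (Nat.cast_nonneg N) he11neg hlow.ne' he11 he12 he22
  have ha : z * (z + 1) ≠ 0 := mul_ne_zero hz.ne (fun h => hz1 (by linarith))
  have hdisc : discrim (z * (z + 1)) (-((M1 : ℝ) - N + 2 * M1 * z + M2 * z - N * z))
      (M1 * ((M1 : ℝ) + M2 - N))
      = ((M1 : ℝ) - N) ^ 2 - 2 * Q * z + ((M2 : ℝ) - N) ^ 2 * z ^ 2 := by
    rw [discrim, hQ]; ring
  have hroot := quadratic_root_eq_of_neg_of_lt ha (rayleigh_quadratic h1 h2 h3) he11neg hlt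
  rw [hdisc, neg_neg] at hroot
  rw [hroot]
  field_simp

/-- For real `z < 0`, `z ≠ −1`, any solution `(e11, e12, e22)` of the
Rayleigh-fading fixed-point system `e11 = M1/(z−e12)`, `e12 = −N/(e22+e11)`,
`e22 = −M2/(1+e12)` whose branch satisfies the Cauchy-transform constraint
`e11/M1 ∈ (1/z, 0)` obeys the closed form
`e11/M1 = [M1−N+2M1 z+M2 z−N z+√((M1−N)²−2Qz+(M2−N)² z²)]/(2M1 z(z+1))`. -/
theorem stmt18 {M1 M2 N : ℕ} (hM1 : 0 < M1) (hle : M1 ≤ M2) (hNM2 : N ≤ M2)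
    (h3 : N < M1 + M2)
    (z : ℝ) (hz : z < 0) (hz1 : z ≠ -1)
    (Q : ℝ) (hQ : Q = N * M1 + N * M2 + M1 * M2 - (N : ℝ) ^ 2)
    (hΔpos : 0 < ((M1 : ℝ) - N) ^ 2 - 2 * Q * z + ((M2 : ℝ) - N) ^ 2 * z ^ 2)
    (e11 e12 e22 : ℝ)
    (he11 : e11 = (M1 : ℝ) / (z - e12))
    (he12 : e12 = -(N : ℝ) / (e22 + e11))
    (he22 : e22 = -(M2 : ℝ) / (1 + e12))
    (hbranch : 1 / z < e11 / M1 ∧ e11 / M1 < 0) :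
    e11 / M1
      = ((M1 : ℝ) - N + 2 * M1 * z + M2 * z - N * z
          + Real.sqrt (((M1 : ℝ) - N) ^ 2 - 2 * Q * z + ((M2 : ℝ) - N) ^ 2 * z ^ 2))
        / (2 * M1 * z * (z + 1)) :=
  stmt18_general hM1 hNM2 z hz hz1 Q hQ e11 e12 e22 he11 he12 he22 hbranch
end
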